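/- Let V : ℝ³ → ℝ³ be a C¹ vector field satisfying V(x) · (∇×V)(x) = 0 for every x ∈ ℝ³, where ∇×V denotes the curl of V. Define the bracket {F,G}(x) := V(x) · (∇F(x) × ∇G(x)) for smooth functions F, G : ℝ³ → ℝ. Then this bracket satisfies the Jacobi identity: for all smooth F, G, H : ℝ³ → ℝ and all x ∈ ℝ³, {{F,G},H}(x) + {{G,H},F}(x) + {{H,F},G}(x) = 0. -/

import Mathlib

open Matrix

/-- The Euclidean gradient of `F : ℝ³ → ℝ`. -/
noncomputable def euclGrad (F : (Fin 3 → ℝ) → ℝ) (x : Fin 3 → ℝ) : Fin 3 → ℝ :=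
  fun i => fderiv ℝ F x (Pi.single i 1)

/-- The curl of a vector field `V : ℝ³ → ℝ³`. -/
noncomputable def curl (V : (Fin 3 → ℝ) → Fin 3 → ℝ) (x : Fin 3 → ℝ) :
    Fin 3 → ℝ :=
  ![fderiv ℝ (fun y => V y 2) x (Pi.single 1 1) -
      fderiv ℝ (fun y => V y 1) x (Pi.single 2 1),
    fderiv ℝ (fun y => V y 0) x (Pi.single 2 1) -
      fderiv ℝ (fun y => V y 2) x (Pi.single 0 1),
    fderiv ℝ (fun y => V y 1) x (Pi.single 0 1) -
      fderiv ℝ (fun y => V y 0) x (Pi.single 1 1)]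

/-- The bracket `{F,G}(x) = V(x) · (∇F(x) × ∇G(x))` on `ℝ³`. -/
noncomputable def vBracket (V : (Fin 3 → ℝ) → Fin 3 → ℝ)
    (F G : (Fin 3 → ℝ) → ℝ) (x : Fin 3 → ℝ) : ℝ :=
  V x ⬝ᵥ crossProduct (euclGrad F x) (euclGrad G x)

private lemma pd_symm {F : (Fin 3 → ℝ) → ℝ} (hF : ContDiff ℝ (⊤ : ℕ∞) F) (x v w : Fin 3 → ℝ) :
    fderiv ℝ (fderiv ℝ F) x v w = fderiv ℝ (fderiv ℝ F) x w v :=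
  (hF.contDiffAt.isSymmSndFDerivAt (by rw [minSmoothness_of_isRCLikeNormedField]; exact WithTop.coe_le_coe.mpr (le_top : (2:ℕ∞) ≤ ⊤))) v w

private lemma pd_hasFDerivAt {F : (Fin 3 → ℝ) → ℝ} (hF : ContDiff ℝ (⊤ : ℕ∞) F) (v x : Fin 3 → ℝ) :
    HasFDerivAt (fun y => fderiv ℝ F y v)
      ((fderiv ℝ (fderiv ℝ F) x).flip v) x := by
  have h1 : HasFDerivAt (fderiv ℝ F) (fderiv ℝ (fderiv ℝ F) x) x :=
    ((hF.fderiv_right (m := 1) (by exact WithTop.coe_le_coe.mpr (le_top : ((1 + 1 : ℕ) : ℕ∞) ≤ ⊤))).differentiable one_ne_zero x).hasFDerivAt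
  have := h1.clm_apply (hasFDerivAt_const v x)
  simpa using this

private lemma vcomp_hasFDerivAt (V : (Fin 3 → ℝ) → Fin 3 → ℝ) (hV : ContDiff ℝ 1 V)
    (x : Fin 3 → ℝ) (k : Fin 3) :
    HasFDerivAt (fun y => V y k)
      ((ContinuousLinearMap.proj (R := ℝ) (φ := fun _ : Fin 3 => ℝ) k).comp (fderiv ℝ V x)) x :=
  (ContinuousLinearMap.proj (R := ℝ) (φ := fun _ : Fin 3 => ℝ) k).hasFDerivAt.comp x
    (hV.differentiable one_ne_zero x).hasFDerivAt

private lemma vB_expand (V : (Fin 3 → ℝ) → Fin 3 → ℝ) (K H : (Fin 3 → ℝ) → ℝ)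
    (x : Fin 3 → ℝ) :
    vBracket V K H x =
      V x 0 * (euclGrad K x 1 * euclGrad H x 2 - euclGrad K x 2 * euclGrad H x 1) +
      V x 1 * (euclGrad K x 2 * euclGrad H x 0 - euclGrad K x 0 * euclGrad H x 2) +
      V x 2 * (euclGrad K x 0 * euclGrad H x 1 - euclGrad K x 1 * euclGrad H x 0) := by
  simp [vBracket, cross_apply, dotProduct, Fin.sum_univ_three]

private lemma grad_bracket (V : (Fin 3 → ℝ) → Fin 3 → ℝ) (hV : ContDiff ℝ 1 V)
    (F G : (Fin 3 → ℝ) → ℝ) (hF : ContDiff ℝ (⊤ : ℕ∞) F) (hG : ContDiff ℝ (⊤ : ℕ∞) G)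
    (x : Fin 3 → ℝ) (i : Fin 3) :
    euclGrad (vBracket V F G) x i =
      fderiv ℝ V x (Pi.single i 1) 0 *
        (euclGrad F x 1 * euclGrad G x 2 - euclGrad F x 2 * euclGrad G x 1) +
      fderiv ℝ V x (Pi.single i 1) 1 *
        (euclGrad F x 2 * euclGrad G x 0 - euclGrad F x 0 * euclGrad G x 2) +
      fderiv ℝ V x (Pi.single i 1) 2 *
        (euclGrad F x 0 * euclGrad G x 1 - euclGrad F x 1 * euclGrad G x 0) +
      V x 0 * (fderiv ℝ (fderiv ℝ F) x (Pi.single i 1) (Pi.single 1 1) * euclGrad G x 2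
             + euclGrad F x 1 * fderiv ℝ (fderiv ℝ G) x (Pi.single i 1) (Pi.single 2 1)
             - fderiv ℝ (fderiv ℝ F) x (Pi.single i 1) (Pi.single 2 1) * euclGrad G x 1
             - euclGrad F x 2 * fderiv ℝ (fderiv ℝ G) x (Pi.single i 1) (Pi.single 1 1)) +
      V x 1 * (fderiv ℝ (fderiv ℝ F) x (Pi.single i 1) (Pi.single 2 1) * euclGrad G x 0
             + euclGrad F x 2 * fderiv ℝ (fderiv ℝ G) x (Pi.single i 1) (Pi.single 0 1)
             - fderiv ℝ (fderiv ℝ F) x (Pi.single i 1) (Pi.single 0 1) * euclGrad G x 2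
             - euclGrad F x 0 * fderiv ℝ (fderiv ℝ G) x (Pi.single i 1) (Pi.single 2 1)) +
      V x 2 * (fderiv ℝ (fderiv ℝ F) x (Pi.single i 1) (Pi.single 0 1) * euclGrad G x 1
             + euclGrad F x 0 * fderiv ℝ (fderiv ℝ G) x (Pi.single i 1) (Pi.single 1 1)
             - fderiv ℝ (fderiv ℝ F) x (Pi.single i 1) (Pi.single 1 1) * euclGrad G x 0
             - euclGrad F x 1 * fderiv ℝ (fderiv ℝ G) x (Pi.single i 1) (Pi.single 0 1)) := by
  have hfun : vBracket V F G = fun y =>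
      V y 0 * ((fun z => fderiv ℝ F z (Pi.single 1 1)) y * (fun z => fderiv ℝ G z (Pi.single 2 1)) y
             - (fun z => fderiv ℝ F z (Pi.single 2 1)) y * (fun z => fderiv ℝ G z (Pi.single 1 1)) y) +
      V y 1 * ((fun z => fderiv ℝ F z (Pi.single 2 1)) y * (fun z => fderiv ℝ G z (Pi.single 0 1)) y
             - (fun z => fderiv ℝ F z (Pi.single 0 1)) y * (fun z => fderiv ℝ G z (Pi.single 2 1)) y) +
      V y 2 * ((fun z => fderiv ℝ F z (Pi.single 0 1)) y * (fun z => fderiv ℝ G z (Pi.single 1 1)) y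
             - (fun z => fderiv ℝ F z (Pi.single 1 1)) y * (fun z => fderiv ℝ G z (Pi.single 0 1)) y) := by
    funext y
    simp [vBracket, euclGrad, cross_apply, dotProduct, Fin.sum_univ_three]
  have Hc :=
    (((vcomp_hasFDerivAt V hV x 0).mul
        (((pd_hasFDerivAt hF (Pi.single 1 1) x).mul (pd_hasFDerivAt hG (Pi.single 2 1) x)).sub
         ((pd_hasFDerivAt hF (Pi.single 2 1) x).mul (pd_hasFDerivAt hG (Pi.single 1 1) x)))).add
      ((vcomp_hasFDerivAt V hV x 1).mul
        (((pd_hasFDerivAt hF (Pi.single 2 1) x).mul (pd_hasFDerivAt hG (Pi.single 0 1) x)).sub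
         ((pd_hasFDerivAt hF (Pi.single 0 1) x).mul (pd_hasFDerivAt hG (Pi.single 2 1) x))))).add
      ((vcomp_hasFDerivAt V hV x 2).mul
        (((pd_hasFDerivAt hF (Pi.single 0 1) x).mul (pd_hasFDerivAt hG (Pi.single 1 1) x)).sub
         ((pd_hasFDerivAt hF (Pi.single 1 1) x).mul (pd_hasFDerivAt hG (Pi.single 0 1) x))))
  show fderiv ℝ (vBracket V F G) x (Pi.single i 1) = _
  simp only [Pi.mul_def, Pi.sub_def, Pi.add_def] at Hc
  rw [hfun, Hc.fderiv]
  simp only [ContinuousLinearMap.add_apply, ContinuousLinearMap.smul_apply,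
    ContinuousLinearMap.sub_apply, ContinuousLinearMap.flip_apply,
    ContinuousLinearMap.comp_apply, ContinuousLinearMap.proj_apply, smul_eq_mul, euclGrad]
  ring

set_option maxHeartbeats 4000000 in
/-- If `V : ℝ³ → ℝ³` is a `C¹` vector field with `V · (∇×V) = 0` everywhere,
then the bracket `{F,G} = V · (∇F × ∇G)` satisfies the Jacobi identity. -/
theorem stmt_9 (V : (Fin 3 → ℝ) → Fin 3 → ℝ) (hV : ContDiff ℝ 1 V)
    (hint : ∀ x, V x ⬝ᵥ curl V x = 0)
    (F G H : (Fin 3 → ℝ) → ℝ)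
    (hF : ContDiff ℝ (⊤ : ℕ∞) F) (hG : ContDiff ℝ (⊤ : ℕ∞) G) (hH : ContDiff ℝ (⊤ : ℕ∞) H)
    (x : Fin 3 → ℝ) :
    vBracket V (vBracket V F G) H x + vBracket V (vBracket V G H) F x +
      vBracket V (vBracket V H F) G x = 0 := by
  have hcomp : ∀ (k : Fin 3) (u : Fin 3 → ℝ),
      fderiv ℝ (fun y => V y k) x u = fderiv ℝ V x u k := by
    intro k u
    rw [(vcomp_hasFDerivAt V hV x k).fderiv]
    rfl
  have h0 := hint x
  simp only [curl, dotProduct, Fin.sum_univ_three, Matrix.cons_val_zero, Matrix.cons_val_one,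
    Matrix.head_cons, Matrix.cons_val_two, Matrix.tail_cons, hcomp] at h0
  rw [vB_expand, vB_expand, vB_expand,
    grad_bracket V hV F G hF hG x 0, grad_bracket V hV F G hF hG x 1,
    grad_bracket V hV F G hF hG x 2,
    grad_bracket V hV G H hG hH x 0, grad_bracket V hV G H hG hH x 1,
    grad_bracket V hV G H hG hH x 2,
    grad_bracket V hV H F hH hF x 0, grad_bracket V hV H F hH hF x 1,
    grad_bracket V hV H F hH hF x 2,
    pd_symm hF x (Pi.single 1 1) (Pi.single 0 1),
    pd_symm hF x (Pi.single 2 1) (Pi.single 0 1),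
    pd_symm hF x (Pi.single 2 1) (Pi.single 1 1),
    pd_symm hG x (Pi.single 1 1) (Pi.single 0 1),
    pd_symm hG x (Pi.single 2 1) (Pi.single 0 1),
    pd_symm hG x (Pi.single 2 1) (Pi.single 1 1),
    pd_symm hH x (Pi.single 1 1) (Pi.single 0 1),
    pd_symm hH x (Pi.single 2 1) (Pi.single 0 1),
    pd_symm hH x (Pi.single 2 1) (Pi.single 1 1)]
  linear_combination
    (euclGrad F x 0 * (euclGrad G x 1 * euclGrad H x 2 - euclGrad G x 2 * euclGrad H x 1) +
     euclGrad F x 1 * (euclGrad G x 2 * euclGrad H x 0 - euclGrad G x 0 * euclGrad H x 2) +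
     euclGrad F x 2 * (euclGrad G x 0 * euclGrad H x 1 - euclGrad G x 1 * euclGrad H x 0)) * h0
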